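/- Truncation error bound for the derivative series (Lemma A.4 of the paper, derivative part): In the TMA(1) setup, define D_t(θ) = -σ^{-1} Σ_{j=1}^∞ Σ_{k=1}^{j} ( ∏_{i=1, i≠k}^{j} A_{t−i}(θ) ) X_{t−j} and its truncated version D̃_t(θ) = -σ^{-1} Σ_{j=1}^{t−1} Σ_{k=1}^{j} ( ∏_{i=1, i≠k}^{j} A_{t−i}(θ) ) X_{t−j} for t ≥ 1. Then almost surely the random variables K₀ = Σ_{k=0}^∞ c₁^k |X_{−k}| and K₁ = Σ_{k=0}^∞ k c₁^k |X_{−k}| are finite and for every integer t ≥ 1 and every θ ∈ Θ, |D̃_t(θ) − D_t(θ)| ≤ c₂^{-1/2} c₁^{t−1} ( K₁ + t K₀ ). -/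

import Mathlib

open MeasureTheory ProbabilityTheory

/-- TMA(1) parameter space `Θ = {(φ, ξ, σ²) : |φ| ≤ c₁, |φ+ξ| ≤ c₁, c₂ ≤ σ² ≤ c₃}`. -/
def tmaTheta (c₁ c₂ c₃ : ℝ) : Set (ℝ × ℝ × ℝ) :=
  {θ | |θ.1| ≤ c₁ ∧ |θ.1 + θ.2.1| ≤ c₁ ∧ c₂ ≤ θ.2.2 ∧ θ.2.2 ≤ c₃}

/-- Inversion coefficient `A_t(θ) = -(φ + ξ·1{X_t ≤ u})`. -/
noncomputable def tmaA {Ω : Type*} (X : ℤ → Ω → ℝ) (u : ℝ) (θ : ℝ × ℝ × ℝ)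
    (t : ℤ) (ω : Ω) : ℝ :=
  -(θ.1 + θ.2.1 * (if X t ω ≤ u then 1 else 0))

/-- Inverted error `ε_t(θ) = σ⁻¹(X_t + Σ_{j≥1} (∏_{i=1}^j A_{t−i}(θ)) X_{t−j})`, written as
`σ⁻¹ Σ_{j≥0} (∏_{i=1}^j A_{t−i}(θ)) X_{t−j}` (the `j = 0` term is `X_t`), `σ = √(σ²)`. -/
noncomputable def tmaEps {Ω : Type*} (X : ℤ → Ω → ℝ) (u : ℝ) (θ : ℝ × ℝ × ℝ)
    (t : ℤ) (ω : Ω) : ℝ :=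
  (Real.sqrt θ.2.2)⁻¹ *
    ∑' j : ℕ, (∏ i ∈ Finset.Icc 1 j, tmaA X u θ (t - (i : ℤ)) ω) * X (t - j) ω

/-- Derivative series `D_t(θ) = -σ⁻¹ Σ_{j≥1} Σ_{k=1}^j (∏_{i=1,i≠k}^j A_{t−i}(θ)) X_{t−j}`. -/
noncomputable def tmaD {Ω : Type*} (X : ℤ → Ω → ℝ) (u : ℝ) (θ : ℝ × ℝ × ℝ)
    (t : ℤ) (ω : Ω) : ℝ :=
  -(Real.sqrt θ.2.2)⁻¹ *
    ∑' j : ℕ, ∑ k ∈ Finset.Icc 1 j,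
      (∏ i ∈ (Finset.Icc 1 j).erase k, tmaA X u θ (t - (i : ℤ)) ω) * X (t - j) ω

/-- Truncated derivative series
`D̃_t(θ) = -σ⁻¹ Σ_{j=1}^{t−1} Σ_{k=1}^j (∏_{i=1,i≠k}^j A_{t−i}(θ)) X_{t−j}`. -/
noncomputable def tmaDT {Ω : Type*} (X : ℤ → Ω → ℝ) (u : ℝ) (θ : ℝ × ℝ × ℝ)
    (t : ℕ) (ω : Ω) : ℝ :=
  -(Real.sqrt θ.2.2)⁻¹ *
    ∑ j ∈ Finset.range t, ∑ k ∈ Finset.Icc 1 j,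
      (∏ i ∈ (Finset.Icc 1 j).erase k, tmaA X u θ ((t : ℤ) - (i : ℤ)) ω) *
        X ((t : ℤ) - (j : ℤ)) ω

/-!
On `Θ` every coefficient satisfies `|A_s(θ)| ≤ c₁`, so the `j`-th term of `D_t(θ)` is at most
`j c₁^(j-1) |X_{t-j}|` and `σ⁻¹ ≤ c₂^(-1/2)`. The truncation error is the tail `j ≥ t`; writing
`j = k + t` gives `j c₁^(j-1) = c₁^(t-1) (k + t) c₁^k`, whence the bound by `K₁ + t K₀`.

The series `K₀, K₁` are finite almost surely because they have finite expectation: the model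
gives `|X_s| ≤ √c₃ (|e_{s-1}| + |e_s|)`, so the `X_s` have uniformly bounded first moments.
-/

open scoped ENNReal
open Finset

lemma abs_sum_prod_erase_le {ι R : Type*} [CommRing R] [LinearOrder R] [IsStrictOrderedRing R]
    [DecidableEq ι] (s : Finset ι) (a : ι → R) {c : R} (ha : ∀ i ∈ s, |a i| ≤ c) :
    |∑ k ∈ s, ∏ i ∈ s.erase k, a i| ≤ #s * c ^ (#s - 1) :=
  calc |∑ k ∈ s, ∏ i ∈ s.erase k, a i|
      ≤ ∑ k ∈ s, ∏ i ∈ s.erase k, |a i| := by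
        simpa only [abs_prod] using abs_sum_le_sum_abs (fun k => ∏ i ∈ s.erase k, a i) s
    _ ≤ ∑ k ∈ s, c ^ #(s.erase k) := by
        gcongr with k
        exact (prod_le_prod (fun i _ => abs_nonneg _) fun i hi => ha i (mem_of_mem_erase hi))
          |>.trans_eq (prod_const c)
    _ = #s * c ^ (#s - 1) := by
        rw [sum_congr rfl fun k hk => by rw [card_erase_of_mem hk], sum_const, nsmul_eq_mul]

lemma norm_sum_range_sub_tsum_le {E : Type*} [NormedAddCommGroup E] [CompleteSpace E]
    {f : ℕ → E} {b : ℕ → ℝ} (t : ℕ) (hb : Summable b) (hfb : ∀ j, ‖f (j + t)‖ ≤ b j) :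
    ‖∑ j ∈ range t, f j - ∑' j, f j‖ ≤ ∑' j, b j := by
  have hf : Summable f := (summable_nat_add_iff t).mp (hb.of_norm_bounded hfb)
  rw [← hf.sum_add_tsum_nat_add t, sub_add_cancel_left, norm_neg]
  exact tsum_of_norm_bounded hb.hasSum hfb

section Deterministic

variable {Ω : Type*} (X : ℤ → Ω → ℝ) (u : ℝ) {c₁ c₂ c₃ : ℝ} {θ : ℝ × ℝ × ℝ}

lemma abs_add_mul_indicator_le (hθ : θ ∈ tmaTheta c₁ c₂ c₃) (p : Prop) [Decidable p] :
    |θ.1 + θ.2.1 * (if p then 1 else 0)| ≤ c₁ := by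
  split_ifs
  · simpa using hθ.2.1
  · simpa using hθ.1

lemma abs_tmaA_le (hθ : θ ∈ tmaTheta c₁ c₂ c₃) (t : ℤ) (ω : Ω) : |tmaA X u θ t ω| ≤ c₁ := by
  rw [tmaA, abs_neg]
  exact abs_add_mul_indicator_le hθ _

noncomputable def tmaDTerm (θ : ℝ × ℝ × ℝ) (t : ℤ) (ω : Ω) (j : ℕ) : ℝ :=
  ∑ k ∈ Icc 1 j, (∏ i ∈ (Icc 1 j).erase k, tmaA X u θ (t - i) ω) * X (t - j) ω

lemma tmaD_eq (θ : ℝ × ℝ × ℝ) (t : ℤ) (ω : Ω) :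
    tmaD X u θ t ω = -(Real.sqrt θ.2.2)⁻¹ * ∑' j, tmaDTerm X u θ t ω j := rfl

lemma tmaDT_eq (θ : ℝ × ℝ × ℝ) (t : ℕ) (ω : Ω) :
    tmaDT X u θ t ω = -(Real.sqrt θ.2.2)⁻¹ * ∑ j ∈ range t, tmaDTerm X u θ t ω j := rfl

lemma abs_tmaDTerm_le (hθ : θ ∈ tmaTheta c₁ c₂ c₃) (t : ℤ) (ω : Ω) (j : ℕ) :
    |tmaDTerm X u θ t ω j| ≤ j * c₁ ^ (j - 1) * |X (t - j) ω| := by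
  rw [tmaDTerm, ← sum_mul, abs_mul]
  gcongr
  simpa using abs_sum_prod_erase_le (Icc 1 j) _ fun i _ => abs_tmaA_le X u hθ _ ω

theorem abs_tmaDT_sub_tmaD_le (hc₂ : 0 < c₂) (hθ : θ ∈ tmaTheta c₁ c₂ c₃)
    (ω : Ω) (hK₀ : Summable fun k : ℕ => c₁ ^ k * |X (-(k : ℤ)) ω|)
    (hK₁ : Summable fun k : ℕ => (k : ℝ) * c₁ ^ k * |X (-(k : ℤ)) ω|) {t : ℕ} (ht : 1 ≤ t) :
    |tmaDT X u θ t ω - tmaD X u θ t ω|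
      ≤ (Real.sqrt c₂)⁻¹ * c₁ ^ (t - 1) *
        ((∑' k : ℕ, (k : ℝ) * c₁ ^ k * |X (-(k : ℤ)) ω|)
          + (t : ℝ) * ∑' k : ℕ, c₁ ^ k * |X (-(k : ℤ)) ω|) := by
  have htail : ∀ j : ℕ, ‖tmaDTerm X u θ t ω (j + t)‖ ≤ c₁ ^ (t - 1) *
      ((j : ℝ) * c₁ ^ j * |X (-(j : ℤ)) ω| + t * (c₁ ^ j * |X (-(j : ℤ)) ω|)) := by
    intro j
    have hpow : c₁ ^ (j + t - 1) = c₁ ^ j * c₁ ^ (t - 1) := by rw [← pow_add]; congr 1; omega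
    have hidx : (t : ℤ) - ((j + t : ℕ) : ℤ) = -(j : ℤ) := by push_cast; ring
    refine (abs_tmaDTerm_le X u hθ t ω (j + t)).trans_eq ?_
    rw [hpow, hidx]
    push_cast
    ring
  have hS := norm_sum_range_sub_tsum_le t ((hK₁.add (hK₀.mul_left (t : ℝ))).mul_left _) htail
  rw [tsum_mul_left, hK₁.tsum_add (hK₀.mul_left _), tsum_mul_left] at hS
  have hσ : (Real.sqrt θ.2.2)⁻¹ ≤ (Real.sqrt c₂)⁻¹ :=
    inv_anti₀ (Real.sqrt_pos.2 hc₂) (Real.sqrt_le_sqrt hθ.2.2.1)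
  rw [tmaDT_eq, tmaD_eq, ← mul_sub, abs_mul, abs_neg, abs_inv,
    abs_of_nonneg (Real.sqrt_nonneg _), mul_assoc]
  gcongr
  exact hS

end Deterministic

section Probabilistic

variable {Ω : Type*} [MeasurableSpace Ω] {μ : Measure Ω}

lemma ae_summable_mul_norm_of_eLpNorm_le {E : Type*} [NormedAddCommGroup E] [NormedSpace ℝ E]
    {Y : ℕ → Ω → E} (hY : ∀ n, AEStronglyMeasurable (Y n) μ) {C : ℝ≥0∞} (hC : C ≠ ∞)
    (hYC : ∀ n, eLpNorm (Y n) 1 μ ≤ C) {g : ℕ → ℝ} (hg : Summable g) :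
    ∀ᵐ ω ∂μ, Summable fun n => g n * ‖Y n ω‖ := by
  have hg' : ∑' n, ‖g n‖ₑ ≠ ∞ := tsum_enorm_ne_top_iff_summable_norm.2 hg.norm
  have hfin : ∑' n, eLpNorm (g n • Y n) 1 μ ≠ ∞ := by
    refine ne_top_of_le_ne_top (ENNReal.mul_ne_top hg' hC) ?_
    rw [← ENNReal.tsum_mul_right]
    exact ENNReal.tsum_le_tsum fun n =>
      (eLpNorm_const_smul _ _ _ _).trans_le (by gcongr; exact hYC n)
  filter_upwards [summable_norm_of_tsum_eLpNorm_ne_top le_rfl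
    (fun n => (hY n).const_smul (g n)) hfin] with ω hω
  exact hω.of_norm_bounded fun n => by simp [norm_smul]

lemma eLpNorm_one_le_of_ae_abs_le {f g h : Ω → ℝ} (hg : AEStronglyMeasurable g μ)
    (hh : AEStronglyMeasurable h μ) {c : ℝ} (hfgh : ∀ᵐ ω ∂μ, |f ω| ≤ c * (|g ω| + |h ω|)) :
    eLpNorm f 1 μ ≤ ‖c‖ₑ * (eLpNorm g 1 μ + eLpNorm h 1 μ) :=
  calc eLpNorm f 1 μ ≤ eLpNorm (c • fun ω => ‖g ω‖ + ‖h ω‖) 1 μ :=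
        eLpNorm_mono_ae_real (by simpa using hfgh)
    _ = ‖c‖ₑ * eLpNorm (fun ω => ‖g ω‖ + ‖h ω‖) 1 μ := eLpNorm_const_smul _ _ _ _
    _ ≤ ‖c‖ₑ * (eLpNorm g 1 μ + eLpNorm h 1 μ) := by
        gcongr
        exact (eLpNorm_add_le hg.norm hh.norm le_rfl).trans_eq (by rw [eLpNorm_norm, eLpNorm_norm])

lemma abs_tma_le {c₁ c₂ c₃ : ℝ} (hc₁ : c₁ ≤ 1) {θ : ℝ × ℝ × ℝ} (hθ : θ ∈ tmaTheta c₁ c₂ c₃)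
    (p : Prop) [Decidable p] (x y : ℝ) :
    |(θ.1 + θ.2.1 * (if p then 1 else 0)) * Real.sqrt θ.2.2 * x + Real.sqrt θ.2.2 * y|
      ≤ Real.sqrt c₃ * (|x| + |y|) := by
  have hb := (abs_add_mul_indicator_le hθ p).trans hc₁
  have hσ : Real.sqrt θ.2.2 ≤ Real.sqrt c₃ := Real.sqrt_le_sqrt hθ.2.2.2
  calc _ ≤ |θ.1 + θ.2.1 * (if p then 1 else 0)| * Real.sqrt θ.2.2 * |x|
        + Real.sqrt θ.2.2 * |y| := by
        simpa only [abs_mul, abs_of_nonneg (Real.sqrt_nonneg θ.2.2)] using abs_add_le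
          ((θ.1 + θ.2.1 * (if p then 1 else 0)) * Real.sqrt θ.2.2 * x) (Real.sqrt θ.2.2 * y)
    _ ≤ 1 * Real.sqrt c₃ * |x| + Real.sqrt c₃ * |y| := by gcongr
    _ = Real.sqrt c₃ * (|x| + |y|) := by ring

lemma eLpNorm_tma_le {u c₁ c₂ c₃ : ℝ} (hc₁ : c₁ ≤ 1) {θ₀ : ℝ × ℝ × ℝ}
    (hθ₀ : θ₀ ∈ tmaTheta c₁ c₂ c₃) {e X : ℤ → Ω → ℝ} (he : ∀ t, AEStronglyMeasurable (e t) μ)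
    (hmodel : ∀ᵐ ω ∂μ, ∀ t : ℤ, X t ω =
      (θ₀.1 + θ₀.2.1 * (if X (t - 1) ω ≤ u then 1 else 0)) * Real.sqrt θ₀.2.2 * e (t - 1) ω
        + Real.sqrt θ₀.2.2 * e t ω) (t : ℤ) :
    eLpNorm (X t) 1 μ ≤ ‖Real.sqrt c₃‖ₑ * (eLpNorm (e (t - 1)) 1 μ + eLpNorm (e t) 1 μ) := by
  refine eLpNorm_one_le_of_ae_abs_le (he _) (he _) ?_
  filter_upwards [hmodel] with ω hω
  rw [hω t]
  exact abs_tma_le hc₁ hθ₀ _ _ _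

end Probabilistic

theorem stmt8_general {Ω : Type*} [MeasurableSpace Ω] (P : Measure Ω)
    (u c₁ c₂ c₃ : ℝ) (hc₁ : 0 < c₁) (hc₁' : c₁ < 1) (hc₂ : 0 < c₂)
    (φ₀ ξ₀ s₀ : ℝ) (hθ₀ : (φ₀, ξ₀, s₀) ∈ tmaTheta c₁ c₂ c₃)
    (e X : ℤ → Ω → ℝ) (he : ∀ t, Measurable (e t)) (hX : ∀ t, Measurable (X t))
    (heG : ∀ t, P.map (e t) = gaussianReal 0 1)
    (hmodel : ∀ᵐ ω ∂P, ∀ t : ℤ, X t ω =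
      (φ₀ + ξ₀ * (if X (t - 1) ω ≤ u then 1 else 0)) * Real.sqrt s₀ * e (t - 1) ω
        + Real.sqrt s₀ * e t ω) :
    ∀ᵐ ω ∂P,
      Summable (fun k : ℕ => c₁ ^ k * |X (-(k : ℤ)) ω|) ∧
      Summable (fun k : ℕ => (k : ℝ) * c₁ ^ k * |X (-(k : ℤ)) ω|) ∧
      ∀ t : ℕ, 1 ≤ t → ∀ θ ∈ tmaTheta c₁ c₂ c₃,
        |tmaDT X u θ t ω - tmaD X u θ (t : ℤ) ω|
          ≤ (Real.sqrt c₂)⁻¹ * c₁ ^ (t - 1) *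
            ((∑' k : ℕ, (k : ℝ) * c₁ ^ k * |X (-(k : ℤ)) ω|)
              + (t : ℝ) * ∑' k : ℕ, c₁ ^ k * |X (-(k : ℤ)) ω|) := by
  set M := eLpNorm id 1 (gaussianReal 0 1) with hM_def
  have hM : M ≠ ∞ := (memLp_id_gaussianReal' 1 ENNReal.one_ne_top).eLpNorm_ne_top
  have he_norm (t : ℤ) : eLpNorm (e t) 1 P = M := by
    rw [hM_def, ← heG t, eLpNorm_map_measure aestronglyMeasurable_id (he t).aemeasurable]
    rfl
  have hX_norm (k : ℕ) : eLpNorm (X (-(k : ℤ))) 1 P ≤ ‖Real.sqrt c₃‖ₑ * (M + M) :=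
    (eLpNorm_tma_le hc₁'.le hθ₀ (fun t => (he t).aestronglyMeasurable) hmodel _).trans_eq
      (by rw [he_norm, he_norm])
  have hsum {g : ℕ → ℝ} (hg : Summable g) :=
    ae_summable_mul_norm_of_eLpNorm_le (fun k => (hX _).aestronglyMeasurable)
      (ENNReal.mul_ne_top enorm_ne_top (ENNReal.add_ne_top.2 ⟨hM, hM⟩)) hX_norm hg
  have hc₁_norm : ‖c₁‖ < 1 := by rwa [Real.norm_of_nonneg hc₁.le]
  filter_upwards [hsum (summable_geometric_of_lt_one hc₁.le hc₁'),
    hsum (hasSum_coe_mul_geometric_of_norm_lt_one' hc₁_norm).summable] with ω hK₀ hK₁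
  simp only [Real.norm_eq_abs] at hK₀ hK₁
  exact ⟨hK₀, hK₁, fun t ht θ hθ => abs_tmaDT_sub_tmaD_le X u hc₂ hθ ω hK₀ hK₁ ht⟩

/-- Lemma A.4, derivative part (truncation error bound for the derivative series):
almost surely `K₀ = Σ_k c₁^k |X_{−k}|` and `K₁ = Σ_k k c₁^k |X_{−k}|` are finite and for
every `t ≥ 1` and `θ ∈ Θ`, `|D̃_t(θ) − D_t(θ)| ≤ c₂^{-1/2} c₁^{t−1} (K₁ + t K₀)`. -/
theorem stmt8 {Ω : Type*} [MeasurableSpace Ω] (P : Measure Ω) [IsProbabilityMeasure P]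
    (u c₁ c₂ c₃ : ℝ) (hc₁ : 0 < c₁) (hc₁' : c₁ < 1) (hc₂ : 0 < c₂) (hc₂₃ : c₂ ≤ c₃)
    (φ₀ ξ₀ s₀ : ℝ) (hθ₀ : (φ₀, ξ₀, s₀) ∈ tmaTheta c₁ c₂ c₃)
    (e X : ℤ → Ω → ℝ) (he : ∀ t, Measurable (e t)) (hX : ∀ t, Measurable (X t))
    (heG : ∀ t, P.map (e t) = gaussianReal 0 1)
    (hmodel : ∀ᵐ ω ∂P, ∀ t : ℤ, X t ω =
      (φ₀ + ξ₀ * (if X (t - 1) ω ≤ u then 1 else 0)) * Real.sqrt s₀ * e (t - 1) ω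
        + Real.sqrt s₀ * e t ω) :
    ∀ᵐ ω ∂P,
      Summable (fun k : ℕ => c₁ ^ k * |X (-(k : ℤ)) ω|) ∧
      Summable (fun k : ℕ => (k : ℝ) * c₁ ^ k * |X (-(k : ℤ)) ω|) ∧
      ∀ t : ℕ, 1 ≤ t → ∀ θ ∈ tmaTheta c₁ c₂ c₃,
        |tmaDT X u θ t ω - tmaD X u θ (t : ℤ) ω|
          ≤ (Real.sqrt c₂)⁻¹ * c₁ ^ (t - 1) *
            ((∑' k : ℕ, (k : ℝ) * c₁ ^ k * |X (-(k : ℤ)) ω|)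
              + (t : ℝ) * ∑' k : ℕ, c₁ ^ k * |X (-(k : ℤ)) ω|) :=
  stmt8_general P u c₁ c₂ c₃ hc₁ hc₁' hc₂ φ₀ ξ₀ s₀ hθ₀ e X he hX heG hmodel
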